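/- In the d-dimensional lattice graph, for every t with d−1 ≤ t ≤ dn−1 the map T₂^{(t)} : ℝ^{L_{t+1}} → ℝ^{∂D \ J_t^S}, sending interface potentials on L_{t+1} to boundary currents on ∂D \ J_t^S of the harmonic extension in the upper subgraph G^{(t)}, is injective. Similarly the corner map T₂'^{(t)} : ℝ^{L_t} → ℝ^{J_{t−1}^S} is injective for d ≤ t ≤ dn. -/

import Mathlib

noncomputable section
open Classical Finset

namespace DiscreteCalderon

/-- Vertices of the ambient lattice `ℤ^d`. -/
abbrev V (d : ℕ) := Fin d → ℤ

/-- Interior vertex set `D = {x : 1 ≤ x_i ≤ n}`. -/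
def Dset (d n : ℕ) : Set (V d) := {x | ∀ i, 1 ≤ x i ∧ x i ≤ (n : ℤ)}

/-- ℓ¹ distance. -/
def dist1 {d : ℕ} (p q : V d) : ℤ := ∑ i, |p i - q i|

/-- Boundary vertex set `∂D`: vertices at ℓ¹ distance 1 from `D`. -/
def Bset (d n : ℕ) : Set (V d) := {p | p ∉ Dset d n ∧ ∃ q ∈ Dset d n, dist1 p q = 1}

/-- All vertices of the graph, `D ∪ ∂D`. -/
def Vset (d n : ℕ) : Set (V d) := Dset d n ∪ Bset d n

/-- Adjacency of the lattice graph: ℓ¹ distance 1, both endpoints vertices,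
not both on the boundary. -/
def Adj (d n : ℕ) (p q : V d) : Prop :=
  dist1 p q = 1 ∧ p ∈ Vset d n ∧ q ∈ Vset d n ∧ (p ∈ Dset d n ∨ q ∈ Dset d n)

/-- A finite box containing all vertices. -/
def box (d n : ℕ) : Finset (V d) :=
  Fintype.piFinset (fun _ : Fin d => Finset.Icc (0 : ℤ) ((n : ℤ) + 1))

/-- Neighbours of `p` in the graph, as a finite set. -/
def nbr (d n : ℕ) (p : V d) : Finset (V d) := (box d n).filter (fun q => Adj d n p q)

/-- Interior neighbours of `p`. -/
def nbrD (d n : ℕ) (p : V d) : Finset (V d) := (nbr d n p).filter (fun q => q ∈ Dset d n)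

/-- The discrete (weighted) Laplacian `(Δ_γ u)_p = ∑_{q∈N(p)} γ_{qp}(u_q - u_p)`. -/
def lap (d n : ℕ) (γ : V d → V d → ℝ) (u : V d → ℝ) (p : V d) : ℝ :=
  ∑ q ∈ nbr d n p, γ q p * (u q - u p)

/-- The boundary current `(D_γ u)_p = ∑_{q∈N(p)∩D} γ_{pq}(u_q - u_p)`
(there is exactly one interior neighbour of a boundary node). -/
def cur (d n : ℕ) (γ : V d → V d → ℝ) (u : V d → ℝ) (p : V d) : ℝ :=
  ∑ q ∈ nbrD d n p, γ p q * (u q - u p)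

/-- A strictly positive symmetric conductivity. -/
def GoodCond (d n : ℕ) (γ : V d → V d → ℝ) : Prop :=
  (∀ p q, γ p q = γ q p) ∧ ∀ p q, Adj d n p q → 0 < γ p q

/-- The coordinate sum of a lattice point. -/
def sum1 {d : ℕ} (x : V d) : ℤ := ∑ i, x i

/-- Interior diagonal slice `L_t`. -/
def L (d n : ℕ) (t : ℤ) : Set (V d) := {x | x ∈ Dset d n ∧ sum1 x = t}

/-- `L_t^S = ∪_{ℓ ≤ t} L_ℓ`. -/
def LS (d n : ℕ) (t : ℤ) : Set (V d) := {x | x ∈ Dset d n ∧ sum1 x ≤ t}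

/-- Boundary diagonal slice `K_t`. -/
def K (d n : ℕ) (t : ℤ) : Set (V d) := {x | x ∈ Bset d n ∧ sum1 x = t}

/-- `K_t^- = {x ∈ K_t : min_i x_i = 0}`. -/
def Km (d n : ℕ) (t : ℤ) : Set (V d) := {x | x ∈ K d n t ∧ ∃ i, x i = 0}

/-- `K_t^+ = {x ∈ K_t : max_i x_i = n+1}`. -/
def Kp (d n : ℕ) (t : ℤ) : Set (V d) := {x | x ∈ K d n t ∧ ∃ i, x i = (n : ℤ) + 1}

/-- `K_t^{S-} = ∪_{ℓ ≤ t} K_ℓ^-`. -/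
def KSm (d n : ℕ) (t : ℤ) : Set (V d) := {x | x ∈ Bset d n ∧ sum1 x ≤ t ∧ ∃ i, x i = 0}

/-- `K_t^{S+} = ∪_{ℓ ≤ t} K_ℓ^+`. -/
def KSp (d n : ℕ) (t : ℤ) : Set (V d) := {x | x ∈ Bset d n ∧ sum1 x ≤ t ∧ ∃ i, x i = (n : ℤ) + 1}

/-- The lower boundary region `J_t^S = K_t^{S-} ∪ K_{t+1}^{S+}`. -/
def JS (d n : ℕ) (t : ℤ) : Set (V d) := KSm d n t ∪ KSp d n (t + 1)

/-- `J_t = K_t^- ∪ K_{t+1}^+`. -/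
def Jslice (d n : ℕ) (t : ℤ) : Set (V d) := Km d n t ∪ Kp d n (t + 1)

/-- `u` is the γ-harmonic extension of boundary data `φ` (zero-extension convention
outside `D ∪ ∂D`). -/
def IsSol (d n : ℕ) (γ : V d → V d → ℝ) (φ u : V d → ℝ) : Prop :=
  (∀ p, p ∉ Vset d n → u p = 0) ∧
  (∀ p ∈ Dset d n, lap d n γ u p = 0) ∧
  (∀ p ∈ Bset d n, u p = φ p)

/-- The Laplacian row vector `v_p`. -/
def vrow (d n : ℕ) (γ : V d → V d → ℝ) (p : V d) : V d → ℝ := fun q =>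
  if Adj d n p q then γ p q
  else if q = p then -(∑ r ∈ nbr d n p, γ p r) else 0

/-- Restriction of a function to a set (zero outside). -/
def rst {d : ℕ} (S : Set (V d)) (f : V d → ℝ) : V d → ℝ := fun q => if q ∈ S then f q else 0

/-- Euclidean inner product of (vertex-supported) functions. -/
def dot (d n : ℕ) (f g : V d → ℝ) : ℝ := ∑ p ∈ box d n, f p * g p

/-- The localized solution space `𝒰^{(t)}`: restrictions to `L_t^S ∪ J_t^S` of
harmonic extensions of boundary potentials in `ker T₁^{(t)}`. -/
def Uset (d n : ℕ) (γ : V d → V d → ℝ) (t : ℤ) : Set (V d → ℝ) :=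
  {u | (∀ p, p ∉ LS d n t ∪ JS d n t → u p = 0) ∧
    ∃ φ w : V d → ℝ, (∀ p, p ∉ JS d n t → φ p = 0) ∧ IsSol d n γ φ w ∧
      (∀ p ∈ L d n (t + 1), w p = 0) ∧ ∀ p ∈ LS d n t ∪ JS d n t, u p = w p}

/-- The set `E_t` of edges between the consecutive layers:
`E(K_t^-, L_{t+1}) ∪ E(L_t, K_{t+1}^+) ∪ E(L_t, L_{t+1})`. -/
def EdgeT (d n : ℕ) (t : ℤ) (p q : V d) : Prop :=
  Adj d n p q ∧
    ((p ∈ Km d n t ∧ q ∈ L d n (t + 1)) ∨ (q ∈ Km d n t ∧ p ∈ L d n (t + 1)) ∨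
     (p ∈ L d n t ∧ q ∈ Kp d n (t + 1)) ∨ (q ∈ L d n t ∧ p ∈ Kp d n (t + 1)) ∨
     (p ∈ L d n t ∧ q ∈ L d n (t + 1)) ∨ (q ∈ L d n t ∧ p ∈ L d n (t + 1)))

/-- The edge vector `J_p^u ∈ ℝ^{E_t}`, `J_p^u(pq) = u_p - u_q` on edges of `E_t`
incident to `p`, and `0` otherwise (as a symmetric function of edge endpoints). -/
def Jvec (d n : ℕ) (t : ℤ) (u : V d → ℝ) (p : V d) : V d → V d → ℝ := fun a b =>
  if EdgeT d n t a b then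
    (if a = p then u a - u b else if b = p then u b - u a else 0)
  else 0

/-- Inner product of edge functions. -/
def dotE (d n : ℕ) (f g : V d → V d → ℝ) : ℝ :=
  ∑ p ∈ box d n, ∑ q ∈ box d n, f p q * g p q

/-! Unique continuation along a coordinate direction `e_i`. Sweep `D` in the lexicographic
order of `(sum1 x, x i)`. If `x i = 1`, the boundary vertex `x - e_i` lies in `J^S_{t-1}` and
`x` is its only interior neighbour, so its vanishing current forces `u x = 0`. Otherwise `u` is
harmonic at `x - e_i` and vanishes at all its other neighbours (they come earlier in the sweep
or lie in `J^S_{t-1}`), which again forces `u x = 0`. The upper map is reduced to the corner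
one by the reflection `x ↦ (n + 1) - x`, which exchanges `D \ L^S_t` and `L^S_{d(n+1)-t-1}`. -/

section Lattice
variable {d n : ℕ}

lemma dist1_comm (p q : V d) : dist1 p q = dist1 q p :=
  Finset.sum_congr rfl fun _ _ => abs_sub_comm _ _

lemma dist1_update (x : V d) (i : Fin d) (c : ℤ) :
    dist1 (Function.update x i c) x = |c - x i| := by
  rw [dist1, Finset.sum_eq_single i (fun j _ hj => by simp [Function.update_of_ne hj])
    (by simp)]
  simp

lemma exists_coord_of_dist1_eq_one {p q : V d} (h : dist1 p q = 1) :
    ∃ i, (q i = p i + 1 ∨ q i = p i - 1) ∧ ∀ j ≠ i, q j = p j := by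
  have hnonneg : ∀ j ∈ Finset.univ, 0 ≤ |p j - q j| := fun j _ => abs_nonneg _
  obtain ⟨i, -, hi⟩ := Finset.exists_ne_zero_of_sum_ne_zero (s := Finset.univ)
    (f := fun j => |p j - q j|) (by rw [← dist1, h]; norm_num)
  have hi_le : |p i - q i| ≤ 1 := h ▸ Finset.single_le_sum hnonneg (Finset.mem_univ i)
  refine ⟨i, by rcases abs_cases (p i - q i) with ⟨_, _⟩ | ⟨_, _⟩ <;> omega, fun j hj => ?_⟩
  have hpair : |p i - q i| + |p j - q j| ≤ 1 := by
    rw [← Finset.sum_pair (f := fun j => |p j - q j|) (Ne.symm hj), ← h]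
    exact Finset.sum_le_sum_of_subset_of_nonneg (Finset.subset_univ _) fun k _ _ => abs_nonneg _
  have hi_pos : 0 < |p i - q i| := lt_of_le_of_ne (abs_nonneg _) (Ne.symm hi)
  have hj_nonneg := abs_nonneg (p j - q j)
  exact (sub_eq_zero.1 (abs_eq_zero.1 (by omega))).symm

lemma sum1_eq_add_of_forall_ne {x y : V d} {i : Fin d} (h : ∀ j ≠ i, y j = x j) :
    sum1 y = sum1 x + (y i - x i) := by
  rw [← sub_eq_iff_eq_add', sum1, sum1, ← Finset.sum_sub_distrib,
    Finset.sum_eq_single i (fun j _ hj => by rw [h j hj, sub_self]) (by simp)]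

lemma coord_not_mem_of_not_mem_Dset {x y : V d} {i : Fin d} (hx : x ∈ Dset d n)
    (hy : y ∉ Dset d n) (h : ∀ j ≠ i, y j = x j) : ¬(1 ≤ y i ∧ y i ≤ (n : ℤ)) := fun hyi =>
  hy fun j => if hj : j = i then hj ▸ hyi else (h j hj).symm ▸ hx j

lemma forall_ne_zero_of_mem_Bset {b : V d} (hb : b ∈ Bset d n) {i : Fin d}
    (hi : b i = (n : ℤ) + 1) (j : Fin d) : b j ≠ 0 := by
  obtain ⟨-, q, hq, hbq⟩ := hb
  obtain ⟨k, -, hk⟩ := exists_coord_of_dist1_eq_one hbq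
  intro hj
  have hij : i ≠ j := fun h => by subst h; omega
  by_cases hik : i = k
  · have := hk j (fun h => hij (hik.trans h.symm)); have := hq j; omega
  · have := hk i hik; have := hq i; omega

lemma mem_box_of_mem_Vset {p : V d} (hp : p ∈ Vset d n) : p ∈ box d n := by
  rw [box, Fintype.mem_piFinset]
  intro j
  rw [Finset.mem_Icc]
  rcases hp with hp | ⟨-, q, hq, hpq⟩
  · have := hp j; omega
  · obtain ⟨k, hk, hne⟩ := exists_coord_of_dist1_eq_one ((dist1_comm q p).trans hpq)
    have := hq j
    by_cases hjk : j = k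
    · subst hjk; omega
    · rw [hne j hjk]; omega

lemma mem_nbr {p q : V d} : q ∈ nbr d n p ↔ Adj d n p q :=
  ⟨fun h => (Finset.mem_filter.1 h).2, fun h => Finset.mem_filter.2 ⟨mem_box_of_mem_Vset h.2.2.1, h⟩⟩

lemma mem_nbrD {p q : V d} : q ∈ nbrD d n p ↔ Adj d n p q ∧ q ∈ Dset d n := by
  rw [nbrD, Finset.mem_filter, mem_nbr]

lemma Adj.symm {p q : V d} (h : Adj d n p q) : Adj d n q p :=
  ⟨(dist1_comm q p).trans h.1, h.2.2.1, h.2.1, h.2.2.2.symm⟩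

lemma eq_clamp_of_dist1_eq_one {x y : V d} (hy : y ∉ Dset d n) (hx : x ∈ Dset d n)
    (h : dist1 y x = 1) : x = fun k => max 1 (min (n : ℤ) (y k)) := by
  obtain ⟨i, hi, hne⟩ := exists_coord_of_dist1_eq_one h
  have hyi := coord_not_mem_of_not_mem_Dset hx hy fun j hj => (hne j hj).symm
  funext k
  have := hx k
  by_cases hk : k = i
  · subst hk; omega
  · rw [← hne k hk]; omega

lemma mem_JS_sum1_of_dist1_eq_one {y b : V d} (hy : y ∈ Dset d n) (hb : b ∈ Bset d n)
    (h : dist1 y b = 1) : b ∈ JS d n (sum1 y) := by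
  obtain ⟨i, hi, hne⟩ := exists_coord_of_dist1_eq_one h
  have hbi := coord_not_mem_of_not_mem_Dset hy hb.1 hne
  have hsum := sum1_eq_add_of_forall_ne hne
  have := hy i
  by_cases hzero : b i = 0
  · exact Or.inl ⟨hb, by omega, i, hzero⟩
  · exact Or.inr ⟨hb, by omega, i, by omega⟩

lemma JS_mono {s t : ℤ} (h : s ≤ t) : JS d n s ⊆ JS d n t := by
  rintro b (⟨hb, hs, hi⟩ | ⟨hb, hs, hi⟩)
  · exact Or.inl ⟨hb, hs.trans h, hi⟩
  · exact Or.inr ⟨hb, by omega, hi⟩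

end Lattice

section LocalContinuation
variable {d n : ℕ} {γ : V d → V d → ℝ} {u : V d → ℝ} {x y : V d}

lemma eq_zero_of_lap_eq_zero (hγ : ∀ p q, Adj d n p q → 0 < γ p q) (hyx : Adj d n y x)
    (hlap : lap d n γ u y = 0) (hy : u y = 0) (hnbr : ∀ b, Adj d n y b → b ≠ x → u b = 0) :
    u x = 0 := by
  rw [lap, Finset.sum_eq_single_of_mem x (mem_nbr.2 hyx) fun b hb hbx => by
    rw [hnbr b (mem_nbr.1 hb) hbx, hy, sub_self, mul_zero], hy, sub_zero] at hlap
  exact (mul_eq_zero.1 hlap).resolve_left (hγ x y hyx.symm).ne'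

lemma eq_zero_of_cur_eq_zero (hγ : ∀ p q, Adj d n p q → 0 < γ p q) (hy : y ∉ Dset d n)
    (hx : x ∈ Dset d n) (hyx : Adj d n y x) (hcur : cur d n γ u y = 0) (huy : u y = 0) :
    u x = 0 := by
  have hunique : ∀ b ∈ nbrD d n y, b = x := fun b hb => by
    obtain ⟨hyb, hbD⟩ := mem_nbrD.1 hb
    rw [eq_clamp_of_dist1_eq_one hy hbD hyb.1, eq_clamp_of_dist1_eq_one hy hx hyx.1]
  rw [cur, Finset.sum_eq_single_of_mem x (mem_nbrD.2 ⟨hyx, hx⟩)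
    fun b hb hbx => absurd (hunique b hb) hbx, huy, sub_zero] at hcur
  exact (mul_eq_zero.1 hcur).resolve_left (hγ y x hyx).ne'

end LocalContinuation

section Corner
variable {d n : ℕ} {γ : V d → V d → ℝ} {t : ℤ} {u : V d → ℝ}

lemma eq_zero_of_eq_zero_before (i : Fin d) (hγ : ∀ p q, Adj d n p q → 0 < γ p q)
    (hlap : ∀ p ∈ LS d n (t - 1), lap d n γ u p = 0) (hu : ∀ p ∈ JS d n (t - 1), u p = 0)
    (hcur : ∀ p ∈ JS d n (t - 1), cur d n γ u p = 0) {x : V d} (hx : x ∈ LS d n t)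
    (hbefore : ∀ y ∈ Dset d n, sum1 y < sum1 x ∨ (sum1 y = sum1 x ∧ y i < x i) → u y = 0) :
    u x = 0 := by
  obtain ⟨hxD, hxt⟩ := hx
  set y := Function.update x i (x i - 1)
  have hyx : dist1 y x = 1 := by rw [dist1_update]; norm_num
  have hyi : y i = x i - 1 := Function.update_self ..
  have hy_ne : ∀ j ≠ i, y j = x j := fun j hj => Function.update_of_ne hj _ _
  have hsum : sum1 y = sum1 x - 1 := by rw [sum1_eq_add_of_forall_ne hy_ne, hyi]; ring
  have hxi := hxD i
  by_cases hxi1 : x i = 1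
  · have hyD : y ∉ Dset d n := fun h => by have := (h i).1; omega
    have hyJ : y ∈ JS d n (t - 1) := Or.inl ⟨⟨hyD, x, hxD, hyx⟩, by omega, i, by omega⟩
    exact eq_zero_of_cur_eq_zero hγ hyD hxD ⟨hyx, Or.inr ⟨hyD, x, hxD, hyx⟩, Or.inl hxD, Or.inr hxD⟩
      (hcur y hyJ) (hu y hyJ)
  have hyD : y ∈ Dset d n := fun j => by
    by_cases hj : j = i
    · subst hj; omega
    · rw [hy_ne j hj]; exact hxD j
  refine eq_zero_of_lap_eq_zero hγ ⟨hyx, Or.inl hyD, Or.inl hxD, Or.inl hyD⟩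
    (hlap y ⟨hyD, by omega⟩) (hbefore y hyD (Or.inl (by omega))) fun b hyb hbx => ?_
  rcases hyb.2.2.1 with hbD | hbB
  · obtain ⟨j, hj, hb_ne⟩ := exists_coord_of_dist1_eq_one hyb.1
    have hbsum := sum1_eq_add_of_forall_ne hb_ne
    refine hbefore b hbD ?_
    by_cases hji : j = i
    · subst hji
      have hbj : b j = y j - 1 := by
        refine hj.resolve_left fun hbj => hbx (funext fun k => ?_)
        by_cases hk : k = j
        · subst hk; omega
        · rw [hb_ne k hk, hy_ne k hk]
      left; omega
    · have := hb_ne i (Ne.symm hji)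
      omega
  · exact hu b (JS_mono (by omega) (mem_JS_sum1_of_dist1_eq_one hyD hbB hyb.1))

theorem unique_continuation_corner (i : Fin d) (hγ : ∀ p q, Adj d n p q → 0 < γ p q)
    (hlap : ∀ p ∈ LS d n (t - 1), lap d n γ u p = 0) (hu : ∀ p ∈ JS d n (t - 1), u p = 0)
    (hcur : ∀ p ∈ JS d n (t - 1), cur d n γ u p = 0) : ∀ x ∈ LS d n t, u x = 0 := by
  intro x hx
  induction hN : (sum1 x * ((n : ℤ) + 2) + x i).toNat using Nat.strong_induction_on
    generalizing x with
  | _ N ih =>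
  refine eq_zero_of_eq_zero_before i hγ hlap hu hcur hx fun y hyD hlt => ?_
  have hweight : ∀ z ∈ Dset d n, 0 ≤ sum1 z * ((n : ℤ) + 2) ∧ 1 ≤ z i ∧ z i ≤ n := fun z hz =>
    ⟨mul_nonneg (Finset.sum_nonneg fun j _ => zero_le_one.trans (hz j).1) (by positivity), hz i⟩
  have := hweight y hyD
  have := hweight x hx.1
  refine ih _ ?_ y ⟨hyD, by have := hx.2; omega⟩ rfl
  rw [← hN]
  rcases hlt with hlt | ⟨heq, hlt⟩
  · have : sum1 y * ((n : ℤ) + 2) + (n + 2) ≤ sum1 x * ((n : ℤ) + 2) := by nlinarith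
    omega
  · rw [heq]; omega

end Corner

section Reflection
variable {d n : ℕ}

def reflect (n : ℕ) (x : V d) : V d := fun i => (n : ℤ) + 1 - x i

lemma reflect_involutive : Function.Involutive (reflect (d := d) n) := fun x =>
  funext fun i => by simp [reflect]

lemma sum1_reflect (x : V d) : sum1 (reflect n x) = (d : ℤ) * ((n : ℤ) + 1) - sum1 x := by
  simp [sum1, reflect, Finset.sum_sub_distrib]

lemma dist1_reflect (p q : V d) : dist1 (reflect n p) (reflect n q) = dist1 p q :=
  Finset.sum_congr rfl fun i _ => by rw [reflect, reflect, abs_sub_comm]; ring_nf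

lemma reflect_mem_Dset {x : V d} : reflect n x ∈ Dset d n ↔ x ∈ Dset d n :=
  forall_congr' fun i => by simp only [reflect]; omega

lemma reflect_mem_Bset {x : V d} : reflect n x ∈ Bset d n ↔ x ∈ Bset d n := by
  have key : ∀ y : V d, y ∈ Bset d n → reflect n y ∈ Bset d n := fun y ⟨hy, q, hq, hyq⟩ =>
    ⟨mt reflect_mem_Dset.1 hy, reflect n q, reflect_mem_Dset.2 hq, (dist1_reflect y q).trans hyq⟩
  exact ⟨fun h => reflect_involutive x ▸ key _ h, key x⟩

lemma adj_reflect {p q : V d} : Adj d n (reflect n p) (reflect n q) ↔ Adj d n p q := by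
  simp only [Adj, Vset, Set.mem_union, dist1_reflect, reflect_mem_Dset, reflect_mem_Bset]

lemma sum_nbr_reflect (p : V d) (f : V d → ℝ) :
    ∑ q ∈ nbr d n (reflect n p), f q = ∑ q ∈ nbr d n p, f (reflect n q) :=
  (Finset.sum_equiv (reflect_involutive.toPerm _)
    (fun _ => by simp only [Function.Involutive.coe_toPerm, mem_nbr, adj_reflect])
    fun _ _ => rfl).symm

lemma sum_nbrD_reflect (p : V d) (f : V d → ℝ) :
    ∑ q ∈ nbrD d n (reflect n p), f q = ∑ q ∈ nbrD d n p, f (reflect n q) :=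
  (Finset.sum_equiv (reflect_involutive.toPerm _)
    (fun _ => by simp only [Function.Involutive.coe_toPerm, mem_nbrD, adj_reflect, reflect_mem_Dset])
    fun _ _ => rfl).symm

lemma lap_reflect (γ : V d → V d → ℝ) (u : V d → ℝ) (p : V d) :
    lap d n γ u (reflect n p) =
      lap d n (fun a b => γ (reflect n a) (reflect n b)) (u ∘ reflect n) p :=
  sum_nbr_reflect p _

lemma cur_reflect (γ : V d → V d → ℝ) (u : V d → ℝ) (p : V d) :
    cur d n γ u (reflect n p) =
      cur d n (fun a b => γ (reflect n a) (reflect n b)) (u ∘ reflect n) p :=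
  sum_nbrD_reflect p _

lemma mem_LS_iff_reflect {s t : ℤ} (hst : s + t + 1 = (d : ℤ) * ((n : ℤ) + 1)) {x : V d} :
    x ∈ LS d n s ↔ reflect n x ∈ Dset d n \ LS d n t := by
  simp only [LS, Set.mem_sdiff, Set.mem_ofPred_eq, reflect_mem_Dset, sum1_reflect, not_and, not_le]
  constructor
  · rintro ⟨hx, hs⟩
    exact ⟨hx, fun _ => by omega⟩
  · rintro ⟨hx, ht⟩
    exact ⟨hx, by have := ht hx; omega⟩

lemma reflect_mem_Bset_diff_JS {s t : ℤ} (hst : s + t + 2 = (d : ℤ) * ((n : ℤ) + 1)) {b : V d}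
    (hb : b ∈ JS d n s) : reflect n b ∈ Bset d n \ JS d n t := by
  have hsum := sum1_reflect (n := n) b
  rcases hb with ⟨hb, hs, -⟩ | ⟨hb, hs, i, hi⟩
  · refine ⟨reflect_mem_Bset.2 hb, ?_⟩
    rintro (⟨-, h, -⟩ | ⟨-, h, -⟩) <;> omega
  · refine ⟨reflect_mem_Bset.2 hb, ?_⟩
    rintro (⟨-, h, -⟩ | ⟨-, -, j, hj⟩)
    · omega
    · exact forall_ne_zero_of_mem_Bset hb hi j (by simp only [reflect] at hj; omega)

theorem unique_continuation_upper (i : Fin d) {γ : V d → V d → ℝ}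
    (hγ : ∀ p q, Adj d n p q → 0 < γ p q) {t : ℤ} {w : V d → ℝ}
    (hlap : ∀ p ∈ Dset d n \ LS d n (t + 1), lap d n γ w p = 0)
    (hw : ∀ p ∈ Bset d n \ JS d n t, w p = 0)
    (hcur : ∀ p ∈ Bset d n \ JS d n t, cur d n γ w p = 0) :
    ∀ x ∈ Dset d n \ LS d n t, w x = 0 := by
  intro x hx
  have := unique_continuation_corner (t := (d : ℤ) * ((n : ℤ) + 1) - t - 1) (u := w ∘ reflect n) i
    (fun p q hpq => hγ _ _ (adj_reflect.2 hpq))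
    (fun p hp => (lap_reflect γ w p).symm.trans (hlap _ ((mem_LS_iff_reflect (by omega)).1 hp)))
    (fun p hp => hw _ (reflect_mem_Bset_diff_JS (by omega) hp))
    (fun p hp => (cur_reflect γ w p).symm.trans (hcur _ (reflect_mem_Bset_diff_JS (by omega) hp)))
    (reflect n x) ((mem_LS_iff_reflect (t := t) (by ring)).2 (by rwa [reflect_involutive x]))
  rwa [Function.comp_apply, reflect_involutive x] at this

end Reflection

theorem stmt7_general (d n : ℕ) (hd : 2 ≤ d)
    (γ : V d → V d → ℝ) (hγ : GoodCond d n γ) :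
    (∀ t : ℤ, (d : ℤ) - 1 ≤ t → t ≤ (d : ℤ) * n - 1 → ∀ w : V d → ℝ,
      (∀ p, p ∉ Vset d n \ (LS d n t ∪ JS d n t) → w p = 0) →
      (∀ p ∈ Dset d n \ LS d n (t + 1), lap d n γ w p = 0) →
      (∀ p ∈ Bset d n \ JS d n t, w p = 0) →
      (∀ p ∈ Bset d n \ JS d n t, cur d n γ w p = 0) →
      ∀ p ∈ L d n (t + 1), w p = 0) ∧
    (∀ t : ℤ, (d : ℤ) ≤ t → t ≤ (d : ℤ) * n → ∀ u : V d → ℝ,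
      (∀ p, p ∉ LS d n t ∪ JS d n (t - 1) → u p = 0) →
      (∀ p ∈ LS d n (t - 1), lap d n γ u p = 0) →
      (∀ p ∈ JS d n (t - 1), u p = 0) →
      (∀ p ∈ JS d n (t - 1), cur d n γ u p = 0) →
      ∀ p ∈ L d n t, u p = 0) := by
  have i : Fin d := ⟨0, by omega⟩
  refine ⟨fun t _ _ w _ hlap hw hcur p hp => ?_, fun t _ _ u _ hlap hu hcur p hp => ?_⟩
  · exact unique_continuation_upper i hγ.2 hlap hw hcur p
      ⟨hp.1, fun h => by have := h.2; have := hp.2; omega⟩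
  · exact unique_continuation_corner i hγ.2 hlap hu hcur p ⟨hp.1, hp.2.le⟩

/-- injectivity of the interface-to-boundary current maps `T₂^{(t)}`
(on the upper subgraph `G^{(t)}`) and `T₂'^{(t)}` (on the corner subgraph), stated
relationally: vanishing boundary current forces vanishing interface potential. -/
theorem stmt7 (d n : ℕ) (hd : 2 ≤ d) (hn : 1 ≤ n)
    (γ : V d → V d → ℝ) (hγ : GoodCond d n γ) :
    (∀ t : ℤ, (d : ℤ) - 1 ≤ t → t ≤ (d : ℤ) * n - 1 → ∀ w : V d → ℝ,
      (∀ p, p ∉ Vset d n \ (LS d n t ∪ JS d n t) → w p = 0) →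
      (∀ p ∈ Dset d n \ LS d n (t + 1), lap d n γ w p = 0) →
      (∀ p ∈ Bset d n \ JS d n t, w p = 0) →
      (∀ p ∈ Bset d n \ JS d n t, cur d n γ w p = 0) →
      ∀ p ∈ L d n (t + 1), w p = 0) ∧
    (∀ t : ℤ, (d : ℤ) ≤ t → t ≤ (d : ℤ) * n → ∀ u : V d → ℝ,
      (∀ p, p ∉ LS d n t ∪ JS d n (t - 1) → u p = 0) →
      (∀ p ∈ LS d n (t - 1), lap d n γ u p = 0) →
      (∀ p ∈ JS d n (t - 1), u p = 0) →
      (∀ p ∈ JS d n (t - 1), cur d n γ u p = 0) →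
      ∀ p ∈ L d n t, u p = 0) :=
  stmt7_general d n hd γ hγ

end DiscreteCalderon
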